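/- arXiv:1706.06182 — 6 statements merged into one kernel-verified Lean document; each statement's English description precedes it below -/
import Mathlib

section
/- For every x ∈ {0,1}^n, the diagonal measure π_x is an extreme point of the convex set B_n: if π_x = β·μ + (1−β)·ν with μ, ν ∈ B_n and β ∈ (0,1), then μ = ν = π_x. -/
open Finset MeasureTheory

noncomputable section

/-- Points of the discrete cube `{0,1}^n`. -/
abbrev Cube (n : ℕ) := Fin n → Bool

/-- Index set of pairs `1 ≤ i < j ≤ n`. -/
abbrev En (n : ℕ) := {p : Fin n × Fin n // p.1 < p.2}

/-- `μ` is an `n`-variate symmetric Bernoulli distribution: nonnegative,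
sums to one, and every coordinate marginal is `Bern(1/2)`. -/
def inBn (n : ℕ) (μ : Cube n → ℝ) : Prop :=
  (∀ y, 0 ≤ μ y) ∧ (∑ y, μ y) = 1 ∧
    ∀ k : Fin n, (∑ y ∈ Finset.univ.filter (fun y : Cube n => y k = false), μ y) = 1/2

/-- The uniform distribution on the diagonal `{x, 1 - x}`. -/
def piDiag (n : ℕ) (x : Cube n) : Cube n → ℝ :=
  fun y => if y = x ∨ y = (fun i => !(x i)) then 1/2 else 0

/-- Agreement probability of coordinates `i`, `j` under `μ`. -/
def lam (n : ℕ) (μ : Cube n → ℝ) (i j : Fin n) : ℝ :=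
  ∑ y ∈ Finset.univ.filter (fun y : Cube n => y i = y j), μ y

/-- Agreement vector of `μ`, indexed by pairs `i < j`. -/
def lamVec (n : ℕ) (μ : Cube n → ℝ) : En n → ℝ :=
  fun p => lam n μ p.1.1 p.1.2

/-- Cut vector of the subset `S` of `{1,...,n}`. -/
def cutVec (n : ℕ) (S : Finset (Fin n)) : En n → ℝ :=
  fun p => if (p.1.1 ∈ S ↔ p.1.2 ∈ S) then 0 else 1

/-- The cut polytope `CUT(n)`. -/
def CUT (n : ℕ) : Set (En n → ℝ) :=
  convexHull ℝ {v | ∃ S : Finset (Fin n), v = cutVec n S}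

/-- The switched cut polytope `CUT*(n)`. -/
def CUTstar (n : ℕ) : Set (En n → ℝ) :=
  convexHull ℝ {v | ∃ S : Finset (Fin n), v = fun p => 1 - cutVec n S p}

/-- Correlation vector of `μ`: `ρ(i,j) = 4 E[Y_i Y_j] - 1`. -/
def corrVec (n : ℕ) (μ : Cube n → ℝ) : En n → ℝ :=
  fun p => 4 * (∑ y : Cube n,
    μ y * (if y p.1.1 then (1:ℝ) else 0) * (if y p.1.2 then (1:ℝ) else 0)) - 1


lemma sum_two_support {n : ℕ} (x xb : Cube n) (hx : x ≠ xb) (f : Cube n → ℝ)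
    (hf : ∀ y, y ≠ x → y ≠ xb → f y = 0) (s : Finset (Cube n)) :
    ∑ y ∈ s, f y = (if x ∈ s then f x else 0) + (if xb ∈ s then f xb else 0) := by
  have : ∀ y ∈ s, f y = (if y = x then f x else 0) + (if y = xb then f xb else 0) := by
    intro y _
    by_cases h1 : y = x
    · subst h1; simp [hx]
    · by_cases h2 : y = xb
      · subst h2; simp [Ne.symm hx, h1]
      · simp [h1, h2, hf y h1 h2]
  rw [Finset.sum_congr rfl this, Finset.sum_add_distrib,
    Finset.sum_ite_eq' s x (fun _ => f x), Finset.sum_ite_eq' s xb (fun _ => f xb)]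

lemma eq_piDiag_of {n : ℕ} (x : Cube n) (μ : Cube n → ℝ) (hn : 0 < n)
    (hμ : inBn n μ) (hsupp : ∀ y, y ≠ x → y ≠ (fun i => !(x i)) → μ y = 0) :
    μ = piDiag n x := by
  set xb : Cube n := fun i => !(x i) with hxb
  set k : Fin n := ⟨0, hn⟩
  have hx : x ≠ xb := by
    intro hh
    have := congrFun hh k
    simp [hxb] at this
  have hsum : μ x + μ xb = 1 := by
    have := sum_two_support x xb hx μ hsupp Finset.univ
    simp at this
    rw [hμ.2.1] at this
    linarith
  have hmarg := hμ.2.2 k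
  rw [sum_two_support x xb hx μ hsupp] at hmarg
  have hmemx : x ∈ Finset.univ.filter (fun y : Cube n => y k = false) ↔ x k = false := by
    simp
  have hmemxb : xb ∈ Finset.univ.filter (fun y : Cube n => y k = false) ↔ x k = true := by
    simp [hxb]
  have hvals : μ x = 1/2 ∧ μ xb = 1/2 := by
    by_cases hk : x k = false
    · have h1 : x ∈ Finset.univ.filter (fun y : Cube n => y k = false) := hmemx.2 hk
      have h2 : xb ∉ Finset.univ.filter (fun y : Cube n => y k = false) := by
        intro hc; have := hmemxb.1 hc; rw [hk] at this; simp at this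
      rw [if_pos h1, if_neg h2] at hmarg
      constructor <;> linarith
    · have hk' : x k = true := by revert hk; cases x k <;> simp
      have h1 : x ∉ Finset.univ.filter (fun y : Cube n => y k = false) := by
        intro hc; have := hmemx.1 hc; rw [hk'] at this; simp at this
      have h2 : xb ∈ Finset.univ.filter (fun y : Cube n => y k = false) := hmemxb.2 hk'
      rw [if_neg h1, if_pos h2] at hmarg
      constructor <;> linarith
  funext y
  simp only [_root_.piDiag]
  by_cases h1 : y = x
  · subst h1; rw [if_pos (Or.inl rfl)]; exact hvals.1
  · by_cases h2 : y = xb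
    · subst h2; rw [if_pos (Or.inr rfl)]; exact hvals.2
    · rw [if_neg (by tauto)]; exact hsupp y h1 h2

theorem piDiag_extreme (n : ℕ) (x : Cube n) (μ ν : Cube n → ℝ)
    (hμ : inBn n μ) (hν : inBn n ν) (β : ℝ) (hβ : β ∈ Set.Ioo (0:ℝ) 1)
    (h : β • μ + (1 - β) • ν = piDiag n x) :
    μ = piDiag n x ∧ ν = piDiag n x := by
  obtain ⟨hβ0, hβ1⟩ := hβ
  have hβ1' : 0 < 1 - β := by linarith
  have hsupp : ∀ y, y ≠ x → y ≠ (fun i => !(x i)) → μ y = 0 ∧ ν y = 0 := by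
    intro y h1 h2
    have hy := congrFun h y
    simp only [Pi.add_apply, Pi.smul_apply, smul_eq_mul] at hy
    simp only [_root_.piDiag] at hy
    rw [if_neg (by tauto)] at hy
    have hμy := hμ.1 y
    have hνy := hν.1 y
    constructor
    · nlinarith
    · nlinarith
  rcases Nat.eq_zero_or_pos n with hn | hn
  · exfalso
    subst hn
    have hx : (fun i => !(x i)) = x := funext fun i => i.elim0
    have hsum := congrArg (fun f => ∑ y, f y) h
    simp only [Pi.add_apply, Pi.smul_apply, smul_eq_mul] at hsum
    rw [Finset.sum_add_distrib, ← Finset.mul_sum, ← Finset.mul_sum,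
      hμ.2.1, hν.2.1] at hsum
    have : ∑ y : Cube 0, piDiag 0 x y = 1/2 := by
      have hu : (Finset.univ : Finset (Cube 0)) = {x} := by
        apply Finset.eq_singleton_iff_unique_mem.2
        exact ⟨Finset.mem_univ x, fun y _ => funext fun i => i.elim0⟩
      rw [hu, Finset.sum_singleton]; simp [_root_.piDiag]
    rw [this] at hsum
    linarith
  · exact ⟨eq_piDiag_of x μ hn hμ (fun y h1 h2 => (hsupp y h1 h2).1),
      eq_piDiag_of x ν hn hν (fun y h1 h2 => (hsupp y h1 h2).2)⟩
end
end

section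
/- If d ∈ CUT(n), then there exists a probability space (Ω, 𝒜, ν) and events A_1, ..., A_n with ν(A_i) = 1/2 for all i, such that d(i,j) = ν(A_i △ A_j) for all 1 ≤ i < j ≤ n. -/
open Finset MeasureTheory

noncomputable section

open scoped ENNReal

/-- Discrete measurable space on the cube. -/
def cubeMS (n : ℕ) : MeasurableSpace (Cube n) := ⊤

/-- Uniform measure on `{x, 1-x}`. -/
def pairM' (n : ℕ) (x : Cube n) : @Measure (Cube n) (cubeMS n) :=
  (2⁻¹ : ℝ≥0∞) • @Measure.dirac _ (cubeMS n) x
    + (2⁻¹ : ℝ≥0∞) • @Measure.dirac _ (cubeMS n) (fun i => !(x i))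

open Classical in
lemma dirac_top_apply {n : ℕ} (a : Cube n) (s : Set (Cube n)) :
    @Measure.dirac _ (cubeMS n) a s = if a ∈ s then 1 else 0 := by
  rw [@Measure.dirac_apply' _ (cubeMS n) s a (MeasurableSpace.measurableSet_top)]
  by_cases h : a ∈ s <;> simp [Set.indicator, h]

open Classical in
lemma pairM'_apply {n : ℕ} (x : Cube n) (s : Set (Cube n)) :
    pairM' n x s = 2⁻¹ * (if x ∈ s then 1 else 0)
      + 2⁻¹ * (if (fun i => !(x i)) ∈ s then 1 else 0) := by
  rw [pairM', Measure.coe_add]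
  simp only [Pi.add_apply, Measure.smul_apply, smul_eq_mul, dirac_top_apply]

theorem mem_cut_exists_events_half (n : ℕ) (d : En n → ℝ) (hd : d ∈ CUT n) :
    ∃ (Ω : Type) (_ : MeasurableSpace Ω) (ν : Measure Ω),
      IsProbabilityMeasure ν ∧
      ∃ A : Fin n → Set Ω,
        (∀ i, MeasurableSet (A i)) ∧ (∀ i, ν (A i) = 1/2) ∧
        ∀ p : En n, d p = (ν (symmDiff (A p.1.1) (A p.1.2))).toReal := by
  classical
  rw [CUT, _root_.convexHull_eq] at hd
  obtain ⟨ι, t, w, z, hw0, hw1, hz, hcm⟩ := hd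
  choose S hS using hz
  set X : {k // k ∈ t} → Cube n := fun k i => decide (i ∈ S k.1 k.2) with hX
  set ν : @Measure (Cube n) (cubeMS n) :=
    ∑ k ∈ t.attach, ENNReal.ofReal (w k.1) • pairM' n (X k) with hν
  have hνapp : ∀ s : Set (Cube n),
      ν s = ∑ k ∈ t.attach, ENNReal.ofReal (w k.1) * pairM' n (X k) s := by
    intro s
    rw [hν, Measure.finset_sum_apply]
    simp [Measure.smul_apply]
  have hd' : ∀ p : En n, d p = ∑ k ∈ t.attach, w k.1 * cutVec n (S k.1 k.2) p := by
    intro p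
    rw [← hcm, Finset.centerMass_eq_of_sum_1 _ _ hw1]
    rw [← Finset.sum_attach t (fun k => w k • z k)]
    rw [Finset.sum_apply]
    exact Finset.sum_congr rfl fun k _ => by rw [Pi.smul_apply, hS k.1 k.2, smul_eq_mul]
  have hw1' : ∑ k ∈ t.attach, w k.1 = 1 := by
    rw [Finset.sum_attach t w]; exact hw1
  refine ⟨Cube n, cubeMS n, ν, ?_, fun i => {y | y i = true}, fun i => trivial, ?_, ?_⟩
  · constructor
    rw [hνapp]
    have : ∀ k ∈ t.attach, ENNReal.ofReal (w k.1) * pairM' n (X k) Set.univ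
        = ENNReal.ofReal (w k.1) := by
      intro k _
      rw [pairM'_apply]
      simp
      rw [ENNReal.inv_two_add_inv_two, mul_one]
    rw [Finset.sum_congr rfl this, ← ENNReal.ofReal_sum_of_nonneg
      (fun k hk => hw0 k.1 k.2), hw1', ENNReal.ofReal_one]
  · intro i
    rw [hνapp]
    have : ∀ k ∈ t.attach, ENNReal.ofReal (w k.1) * pairM' n (X k) {y | y i = true}
        = ENNReal.ofReal (w k.1) * 2⁻¹ := by
      intro k _
      rw [pairM'_apply]
      simp only [Set.mem_setOf_eq]
      by_cases h : X k i = true <;> simp [h]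
    rw [Finset.sum_congr rfl this, ← Finset.sum_mul, ← ENNReal.ofReal_sum_of_nonneg
      (fun k hk => hw0 k.1 k.2), hw1', ENNReal.ofReal_one, one_mul, one_div]
  · intro p
    have hmem : ∀ y : Cube n, y ∈ symmDiff {y : Cube n | y p.1.1 = true} {y | y p.1.2 = true}
        ↔ ¬ (y p.1.1 = y p.1.2) := by
      intro y
      rw [Set.mem_symmDiff]
      simp only [Set.mem_setOf_eq]
      cases h1 : y p.1.1 <;> cases h2 : y p.1.2 <;> simp
    rw [hνapp]
    have : ∀ k ∈ t.attach, ENNReal.ofReal (w k.1) *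
        pairM' n (X k) (symmDiff {y : Cube n | y p.1.1 = true} {y | y p.1.2 = true})
        = ENNReal.ofReal (w k.1 * cutVec n (S k.1 k.2) p) := by
      intro k _
      rw [pairM'_apply]
      simp only [hmem]
      have hcv : cutVec n (S k.1 k.2) p = if X k p.1.1 = X k p.1.2 then 0 else 1 := by
        rw [cutVec, hX]
        simp only [decide_eq_decide]
      rw [hcv]
      by_cases h : X k p.1.1 = X k p.1.2
      · simp [h, ENNReal.ofReal_mul (hw0 k.1 k.2)]
      · have h' : ¬ (!(X k p.1.1)) = (!(X k p.1.2)) := by simpa using h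
        rw [if_pos h, if_pos h', if_neg h]
        simp [ENNReal.inv_two_add_inv_two]
    rw [Finset.sum_congr rfl this, ← ENNReal.ofReal_sum_of_nonneg, ← hd' p,
      ENNReal.toReal_ofReal]
    · rw [hd' p]
      apply Finset.sum_nonneg
      intro k hk
      apply mul_nonneg (hw0 k.1 k.2)
      rw [cutVec]; positivity
    · intro k hk
      apply mul_nonneg (hw0 k.1 k.2)
      rw [cutVec]; positivity
end
end

section
/- Conversely, if there exists a probability space (Ω, 𝒜, ν) and events A_1,...,A_n ∈ 𝒜 such that d(i,j) = ν(A_i △ A_j) for all 1 ≤ i < j ≤ n, then d ∈ CUT(n). -/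
open Finset MeasureTheory

noncomputable section

/-! With `S ω = {i | ω ∈ A i}`, the `(i, j)` entry of the cut vector `δ(S ω)` is the indicator
of `A i △ A j` at `ω`, so `d` is the expectation of the random cut vector `δ(S ω)`; the expectation
of a random point of the closed convex set `CUT(n)` lies in `CUT(n)`. -/

open Classical in
theorem cutVec_filter_mem_apply {Ω : Type*} {n : ℕ} (A : Fin n → Set Ω) (ω : Ω) (p : En n) :
    cutVec n {i | ω ∈ A i} p = (symmDiff (A p.1.1) (A p.1.2)).indicator 1 ω := by
  by_cases h : ω ∈ A p.1.1 <;> by_cases h' : ω ∈ A p.1.2 <;>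
    simp [cutVec, Set.indicator, Set.mem_symmDiff, h, h']

namespace CUT

theorem isClosed (n : ℕ) : IsClosed (CUT n) := by
  have hfin : {v | ∃ S : Finset (Fin n), v = cutVec n S}.Finite :=
    (Set.finite_range (cutVec n)).subset fun _ ⟨S, hS⟩ => ⟨S, hS.symm⟩
  exact (hfin.isCompact_convexHull (𝕜 := ℝ)).isClosed

theorem integral_cutVec_mem {Ω : Type*} [MeasurableSpace Ω] {ν : Measure Ω}
    [IsProbabilityMeasure ν] {n : ℕ} (S : Ω → Finset (Fin n))
    (hS : ∀ p, Integrable (fun ω => cutVec n (S ω) p) ν) :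
    ∫ ω, cutVec n (S ω) ∂ν ∈ CUT n :=
  (convex_convexHull ℝ _).integral_mem (isClosed n)
    (ae_of_all _ fun ω => subset_convexHull ℝ _ ⟨S ω, rfl⟩) (Integrable.of_eval hS)

end CUT

theorem events_symmDiff_mem_cut (n : ℕ) (d : En n → ℝ)
    {Ω : Type*} [MeasurableSpace Ω] (ν : Measure Ω) [IsProbabilityMeasure ν]
    (A : Fin n → Set Ω) (hA : ∀ i, MeasurableSet (A i))
    (hd : ∀ p : En n, d p = (ν (symmDiff (A p.1.1) (A p.1.2))).toReal) :
    d ∈ CUT n := by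
  classical
  have hcut (p : En n) : (fun ω => cutVec n {i | ω ∈ A i} p) =
      (symmDiff (A p.1.1) (A p.1.2)).indicator 1 :=
    funext fun ω => cutVec_filter_mem_apply A ω p
  have hmeas (p : En n) : MeasurableSet (symmDiff (A p.1.1) (A p.1.2)) :=
    (hA _).symmDiff (hA _)
  have hint (p : En n) : Integrable (fun ω => cutVec n {i | ω ∈ A i} p) ν := by
    rw [hcut]
    exact (integrable_const 1).indicator (hmeas p)
  have hd_eq : d = ∫ ω, cutVec n {i | ω ∈ A i} ∂ν := funext fun p => by
    rw [eval_integral hint, hcut, integral_indicator_one (hmeas p), hd p, measureReal_def]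
  exact hd_eq ▸ CUT.integral_cutVec_mem _ hint
end
end

section
/- The set of agreement vectors of n-variate symmetric Bernoulli distributions equals CUT*(n): Λ(B_n) = CUT*(n), where Λ(μ)(i,j) = μ({y ∈ {0,1}^n : y_i = y_j}). -/
open Finset MeasureTheory

noncomputable section

/-- auxiliary measure: uniform on `{x, ¬x}` written as a sum of indicators. -/
def myMu (n : ℕ) (S : Finset (Fin n)) : Cube n → ℝ :=
  fun y => (if y = (fun i => decide (i ∈ S)) then (1:ℝ)/2 else 0)
    + (if y = (fun i => !decide (i ∈ S)) then (1:ℝ)/2 else 0)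

lemma vert_eq (n : ℕ) (y : Cube n) (p : En n) :
    (if y p.1.1 = y p.1.2 then (1:ℝ) else 0)
      = 1 - cutVec n (Finset.univ.filter (fun i => y i = true)) p := by
  simp only [cutVec, Finset.mem_filter, Finset.mem_univ, true_and]
  cases h1 : y p.1.1 <;> cases h2 : y p.1.2 <;> simp

lemma myMu_inBn (n : ℕ) (S : Finset (Fin n)) : inBn n (myMu n S) := by
  refine ⟨fun y => ?_, ?_, fun k => ?_⟩
  · unfold myMu; positivity
  · unfold myMu
    rw [Finset.sum_add_distrib, Finset.sum_ite_eq' Finset.univ, Finset.sum_ite_eq' Finset.univ]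
    norm_num
  · unfold myMu
    rw [Finset.sum_add_distrib, Finset.sum_ite_eq', Finset.sum_ite_eq']
    simp only [Finset.mem_filter, Finset.mem_univ, true_and]
    cases h : decide (k ∈ S) <;> simp [h]

lemma lamVec_myMu (n : ℕ) (S : Finset (Fin n)) :
    lamVec n (myMu n S) = fun p => 1 - cutVec n S p := by
  funext p
  obtain ⟨⟨i, j⟩, _⟩ := p
  simp only [lamVec, lam, myMu, cutVec]
  rw [Finset.sum_add_distrib, Finset.sum_ite_eq', Finset.sum_ite_eq']
  simp only [Finset.mem_filter, Finset.mem_univ, true_and]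
  by_cases h : (i ∈ S ↔ j ∈ S)
  · simp [h, decide_eq_decide.mpr h]
    norm_num
  · have h1 : ¬ (decide (i ∈ S) = decide (j ∈ S)) := by
      simpa [decide_eq_decide] using h
    have h2 : ¬ ((!decide (i ∈ S)) = (!decide (j ∈ S))) := by
      simpa using h1
    simp [h, h1, h2]

theorem lambda_Bn_eq_cutstar (n : ℕ) :
    {v | ∃ μ : Cube n → ℝ, inBn n μ ∧ v = lamVec n μ} = CUTstar n := by
  apply Set.Subset.antisymm
  · rintro v ⟨μ, ⟨hpos, hsum, _⟩, rfl⟩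
    have key : lamVec n μ
        = ∑ y : Cube n, μ y • (fun p => 1 - cutVec n (Finset.univ.filter (fun i => y i = true)) p) := by
      funext p
      simp only [lamVec, lam, Finset.sum_apply, Pi.smul_apply, smul_eq_mul,
        ← vert_eq n _ p]
      rw [Finset.sum_filter]
      exact Finset.sum_congr rfl (fun y _ => by by_cases h : y p.1.1 = y p.1.2 <;> simp [h])
    rw [key]
    have hmem : ∀ y ∈ (Finset.univ : Finset (Cube n)),
        (fun p => 1 - cutVec n (Finset.univ.filter (fun i => y i = true)) p) ∈
          {v : En n → ℝ | ∃ S : Finset (Fin n), v = fun p => 1 - cutVec n S p} :=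
      fun y _ => ⟨_, rfl⟩
    have := Finset.centerMass_mem_convexHull (Finset.univ : Finset (Cube n))
      (fun y _ => hpos y) (by rw [hsum]; norm_num) hmem
    rwa [Finset.centerMass_eq_of_sum_1 _ _ hsum] at this
  · apply convexHull_min
    · rintro v ⟨S, rfl⟩
      exact ⟨myMu n S, myMu_inBn n S, (lamVec_myMu n S).symm⟩
    · rintro v₁ ⟨μ₁, ⟨h1p, h1s, h1m⟩, rfl⟩ v₂ ⟨μ₂, ⟨h2p, h2s, h2m⟩, rfl⟩ a b ha hb hab
      refine ⟨fun y => a * μ₁ y + b * μ₂ y, ⟨fun y => add_nonneg (mul_nonneg ha (h1p y)) (mul_nonneg hb (h2p y)), ?_, fun k => ?_⟩, ?_⟩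
      · rw [Finset.sum_add_distrib, ← Finset.mul_sum, ← Finset.mul_sum, h1s, h2s]
        simpa using hab
      · rw [Finset.sum_add_distrib, ← Finset.mul_sum, ← Finset.mul_sum, h1m, h2m]
        linarith
      · funext p
        simp only [lamVec, lam, Pi.add_apply, Pi.smul_apply, smul_eq_mul]
        rw [Finset.sum_add_distrib, ← Finset.mul_sum, ← Finset.mul_sum]
end
end

section
/- A vector ρ ∈ [−1,1]^{E_n} is the correlation vector of some n-variate symmetric Bernoulli distribution if and only if ρ is a convex combination of the vectors R(π_x), x ∈ {0,1}^n, where R(π_x)(i,j) = 2·1(x_i = x_j) − 1. -/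
open Finset MeasureTheory

noncomputable section

/-- marginal in multiplicative form -/
lemma marg_mul (n : ℕ) (μ : Cube n → ℝ) (h : inBn n μ) (k : Fin n) :
    (∑ y : Cube n, μ y * (if y k then (1:ℝ) else 0)) = 1/2 := by
  obtain ⟨_, hsum, hmarg⟩ := h
  have h1 : (∑ y : Cube n, μ y * (if y k then (1:ℝ) else 0))
      = ∑ y ∈ Finset.univ.filter (fun y : Cube n => y k = true), μ y := by
    rw [Finset.sum_filter]
    refine Finset.sum_congr rfl fun y _ => ?_
    by_cases hy : y k <;> simp [hy]
  have h2 := Finset.sum_filter_add_sum_filter_not Finset.univ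
      (fun y : Cube n => y k = true) μ
  simp only [Bool.not_eq_true] at h2
  rw [hsum, hmarg k] at h2
  rw [h1]; linarith

lemma key_sum (n : ℕ) (μ : Cube n → ℝ) (h : inBn n μ) (i j : Fin n) :
    (∑ y : Cube n, μ y * (2 * (if y i = y j then (1:ℝ) else 0) - 1))
      = 4 * (∑ y : Cube n,
        μ y * (if y i then (1:ℝ) else 0) * (if y j then (1:ℝ) else 0)) - 1 := by
  have hpt : ∀ y : Cube n, μ y * (2 * (if y i = y j then (1:ℝ) else 0) - 1)
      = 4 * (μ y * (if y i then (1:ℝ) else 0) * (if y j then (1:ℝ) else 0))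
        + μ y - 2 * (μ y * (if y i then (1:ℝ) else 0))
        - 2 * (μ y * (if y j then (1:ℝ) else 0)) := by
    intro y
    cases hy : y i <;> cases hy' : y j <;> simp <;> ring
  rw [Finset.sum_congr rfl (fun y _ => hpt y)]
  simp only [Finset.sum_sub_distrib, Finset.sum_add_distrib, ← Finset.mul_sum]
  rw [marg_mul n μ h i, marg_mul n μ h j, h.2.1]
  ring

/-- the component measure -/
def nu (n : ℕ) (x : Cube n) : Cube n → ℝ :=
  fun y => (if y = x then 1/2 else 0) + (if y = (fun i => !(x i)) then 1/2 else 0)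

lemma nu_nonneg (n : ℕ) (x y : Cube n) : 0 ≤ nu n x y := by
  unfold nu; positivity

lemma nu_sum (n : ℕ) (x : Cube n) : (∑ y, nu n x y) = 1 := by
  unfold nu
  rw [Finset.sum_add_distrib]
  rw [Finset.sum_ite_eq' Finset.univ x (fun _ => (1/2:ℝ)),
      Finset.sum_ite_eq' Finset.univ (fun i => !(x i)) (fun _ => (1/2:ℝ))]
  norm_num

lemma nu_marg (n : ℕ) (x : Cube n) (k : Fin n) :
    (∑ y ∈ Finset.univ.filter (fun y : Cube n => y k = false), nu n x y) = 1/2 := by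
  rw [Finset.sum_filter]
  unfold nu
  have hpt : ∀ y : Cube n,
      (if y k = false then
        ((if y = x then (1/2:ℝ) else 0) + (if y = (fun i => !(x i)) then 1/2 else 0)) else 0)
      = (if y = x then (if x k = false then (1/2:ℝ) else 0) else 0)
        + (if y = (fun i => !(x i)) then (if (!(x k)) = false then (1/2:ℝ) else 0) else 0) := by
    intro y
    by_cases h1 : y = x
    · by_cases h2 : y = (fun i => !(x i))
      · exfalso
        have := congrFun (h1.symm.trans h2) k
        simp at this
      · subst h1; simp [h2]
    · by_cases h2 : y = (fun i => !(x i))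
      · subst h2; simp [h1]
      · simp [h1, h2]
  rw [Finset.sum_congr rfl (fun y _ => hpt y), Finset.sum_add_distrib,
      Finset.sum_ite_eq' Finset.univ x, Finset.sum_ite_eq' Finset.univ (fun i => !(x i))]
  cases hk : x k <;> simp

lemma nu_corr (n : ℕ) (x : Cube n) (i j : Fin n) :
    (∑ y : Cube n, nu n x y * (if y i then (1:ℝ) else 0) * (if y j then (1:ℝ) else 0))
      = (1/2) * (if x i = x j then (1:ℝ) else 0) := by
  unfold nu
  have hpt : ∀ y : Cube n,
      ((if y = x then (1/2:ℝ) else 0) + (if y = (fun i => !(x i)) then 1/2 else 0))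
        * (if y i then (1:ℝ) else 0) * (if y j then (1:ℝ) else 0)
      = (if y = x then (1/2:ℝ) * (if x i then (1:ℝ) else 0) * (if x j then (1:ℝ) else 0) else 0)
        + (if y = (fun i => !(x i)) then
            (1/2:ℝ) * (if !(x i) then (1:ℝ) else 0) * (if !(x j) then (1:ℝ) else 0) else 0) := by
    intro y
    by_cases h1 : y = x
    · by_cases h2 : y = (fun i => !(x i))
      · exfalso
        have := congrFun (h1.symm.trans h2) i
        simp at this
      · subst h1; simp [h2]
    · by_cases h2 : y = (fun i => !(x i))
      · subst h2; simp [h1]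
      · simp [h1, h2]
  rw [Finset.sum_congr rfl (fun y _ => hpt y), Finset.sum_add_distrib,
      Finset.sum_ite_eq' Finset.univ x, Finset.sum_ite_eq' Finset.univ (fun i => !(x i))]
  simp only [Finset.mem_univ, if_true]
  cases hi : x i <;> cases hj : x j <;> norm_num

theorem corr_iff_convexComb_diag (n : ℕ) (ρ : En n → ℝ)
    (hρ : ∀ p, ρ p ∈ Set.Icc (-1 : ℝ) 1) :
    (∃ μ : Cube n → ℝ, inBn n μ ∧ corrVec n μ = ρ) ↔
      ρ ∈ convexHull ℝ
        {v : En n → ℝ | ∃ x : Cube n,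
          v = fun p => 2 * (if x p.1.1 = x p.1.2 then (1:ℝ) else 0) - 1} := by
  constructor
  · rintro ⟨μ, hμ, rfl⟩
    have h1 : (Finset.univ : Finset (Cube n)).centerMass μ
        (fun x : Cube n => fun p : En n => 2 * (if x p.1.1 = x p.1.2 then (1:ℝ) else 0) - 1)
        = corrVec n μ := by
      rw [Finset.centerMass_eq_of_sum_1 _ _ hμ.2.1]
      funext p
      rw [Finset.sum_apply]
      simp only [Pi.smul_apply, smul_eq_mul]
      rw [key_sum n μ hμ p.1.1 p.1.2]
      rfl
    rw [← h1]
    exact Finset.centerMass_mem_convexHull _ (fun y _ => hμ.1 y) (by rw [hμ.2.1]; norm_num)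
      (fun y _ => ⟨y, rfl⟩)
  · intro hmem
    rw [_root_.convexHull_eq] at hmem
    obtain ⟨ι, t, w, z, hw0, hw1, hz, hcm⟩ := hmem
    choose xf hxf using hz
    classical
    -- turn xf (partial) into total function
    set μ : Cube n → ℝ := fun y => ∑ i ∈ t.attach, w i.1 * nu n (xf i.1 i.2) y with hμdef
    refine ⟨μ, ⟨?_, ?_, ?_⟩, ?_⟩
    · intro y
      exact Finset.sum_nonneg fun i _ => mul_nonneg (hw0 i.1 i.2) (nu_nonneg _ _ _)
    · rw [Finset.sum_comm]
      calc (∑ i ∈ t.attach, ∑ y : Cube n, w i.1 * nu n (xf i.1 i.2) y)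
          = ∑ i ∈ t.attach, w i.1 := by
            refine Finset.sum_congr rfl fun i _ => ?_
            rw [← Finset.mul_sum, nu_sum]; ring
        _ = 1 := by rw [Finset.sum_attach]; exact hw1
    · intro k
      rw [Finset.sum_comm]
      calc (∑ i ∈ t.attach, ∑ y ∈ Finset.univ.filter (fun y : Cube n => y k = false),
              w i.1 * nu n (xf i.1 i.2) y)
          = ∑ i ∈ t.attach, w i.1 * (1/2) := by
            refine Finset.sum_congr rfl fun i _ => ?_
            rw [← Finset.mul_sum, nu_marg]
        _ = 1/2 := by
            rw [← Finset.sum_mul, Finset.sum_attach, hw1]; ring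
    · funext p
      have hzval : ∀ i (hi : i ∈ t), z i p
          = 2 * (if xf i hi p.1.1 = xf i hi p.1.2 then (1:ℝ) else 0) - 1 := by
        intro i hi; rw [hxf i hi]
      have hsum : (∑ y : Cube n,
          μ y * (if y p.1.1 then (1:ℝ) else 0) * (if y p.1.2 then (1:ℝ) else 0))
          = ∑ i ∈ t.attach, w i.1 * ((1/2) *
              (if xf i.1 i.2 p.1.1 = xf i.1 i.2 p.1.2 then (1:ℝ) else 0)) := by
        simp only [hμdef, Finset.sum_mul]
        rw [Finset.sum_comm]
        refine Finset.sum_congr rfl fun i _ => ?_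
        have : ∀ y : Cube n, w i.1 * nu n (xf i.1 i.2) y
            * (if y p.1.1 then (1:ℝ) else 0) * (if y p.1.2 then (1:ℝ) else 0)
            = w i.1 * (nu n (xf i.1 i.2) y
            * (if y p.1.1 then (1:ℝ) else 0) * (if y p.1.2 then (1:ℝ) else 0)) := by
          intro y; ring
        rw [Finset.sum_congr rfl (fun y _ => this y), ← Finset.mul_sum, nu_corr]
      have hρeq : ρ p = ∑ i ∈ t.attach, w i.1 * z i.1 p := by
        rw [← hcm, Finset.centerMass_eq_of_sum_1 _ _ hw1, Finset.sum_apply]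
        simp only [Pi.smul_apply, smul_eq_mul]
        rw [← Finset.sum_attach t (fun i => w i * z i p)]
      have hw1' : (∑ i ∈ t.attach, w i.1) = 1 := by rw [Finset.sum_attach]; exact hw1
      show 4 * _ - 1 = ρ p
      rw [hsum, hρeq]
      have : ∀ i ∈ t.attach, w i.1 * z i.1 p
          = 4 * (w i.1 * ((1/2) * (if xf i.1 i.2 p.1.1 = xf i.1 i.2 p.1.2 then (1:ℝ) else 0)))
            - w i.1 := by
        intro i _
        rw [hzval i.1 i.2]; ring
      rw [Finset.sum_congr rfl this, Finset.sum_sub_distrib, hw1', ← Finset.mul_sum]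
end
end

section
/- The matrix with diagonal entries 1 and all off-diagonal entries equal to −0.4 is positive semidefinite (for n = 3), but the vector ρ with ρ(i,j) = −0.4 for all pairs 1 ≤ i < j ≤ 3 is not the correlation vector of any measure in B_3; equivalently, 1 − 2ρ = (1.8, 1.8, 1.8) ∉ CUT(3). -/
open Finset MeasureTheory

noncomputable section

/-! For `μ ∈ B_n`, the disagreement probabilities `P(Y_i ≠ Y_j) = (1 - ρ(i,j)) / 2` form the
`μ`-average of the cut vectors of the random cut `{i | Y_i = 1}`, so they lie in `CUT(n)`. A cut
separates either none or exactly two of the three pairs of a triangle, so `CUT(n)` satisfies the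
perimeter inequality `v(i,j) + v(i,k) + v(j,k) ≤ 2`, which `ρ ≡ -0.4` (giving `0.7` per pair) and
`1.8` both violate. The matrix is PSD because its quadratic form `(1 - c)‖x‖² + c (∑ x)²` is at
least `(1 + (n - 1) c)‖x‖²` by Cauchy–Schwarz when `c < 0`. -/

section EquicorrelationMatrix

open Matrix

variable {ι : Type*} [Fintype ι] [DecidableEq ι]

lemma equicorrelation_mulVec_apply (c : ℝ) (x : ι → ℝ) (i : ι) :
    (Matrix.of (fun i j : ι => if i = j then (1:ℝ) else c) *ᵥ x) i =
      (1 - c) * x i + c * ∑ j, x j := by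
  have hentry : ∀ j, (if i = j then (1:ℝ) else c) * x j =
      (if i = j then (1 - c) * x j else 0) + c * x j := by
    intro j
    split_ifs <;> ring
  simp only [mulVec, dotProduct, of_apply, hentry, Finset.sum_add_distrib, Finset.sum_ite_eq,
    Finset.mem_univ, if_true, Finset.mul_sum]

lemma dotProduct_equicorrelation_mulVec (c : ℝ) (x : ι → ℝ) :
    x ⬝ᵥ (Matrix.of (fun i j : ι => if i = j then (1:ℝ) else c) *ᵥ x) =
      (1 - c) * ∑ i, x i ^ 2 + c * (∑ i, x i) ^ 2 := by
  have hdiag : ∑ i, x i * ((1 - c) * x i) = (1 - c) * ∑ i, x i ^ 2 := by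
    rw [Finset.mul_sum]
    exact Finset.sum_congr rfl fun i _ => by ring
  have hoff : ∑ i, x i * (c * ∑ j, x j) = c * (∑ i, x i) ^ 2 := by
    rw [← Finset.sum_mul]
    ring
  simp only [dotProduct, equicorrelation_mulVec_apply, mul_add, Finset.sum_add_distrib, hdiag,
    hoff]

theorem posSemidef_equicorrelation {c : ℝ} (hc : c ≤ 1)
    (hc' : -1 ≤ (Fintype.card ι - 1 : ℝ) * c) :
    (Matrix.of (fun i j : ι => if i = j then (1:ℝ) else c)).PosSemidef := by
  refine .of_dotProduct_mulVec_nonneg ?_ fun x => ?_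
  · ext i j
    simp [eq_comm]
  · rw [star_trivial, dotProduct_equicorrelation_mulVec]
    have hcs : (∑ i, x i) ^ 2 ≤ Fintype.card ι * ∑ i, x i ^ 2 := sq_sum_le_card_mul_sum_sq
    have hsq : 0 ≤ ∑ i, x i ^ 2 := by positivity
    rcases le_total 0 c with hc0 | hc0
    · have := mul_nonneg hc0 (sq_nonneg (∑ i, x i))
      nlinarith
    · nlinarith [mul_nonneg (neg_nonneg.2 hc0) (sub_nonneg.2 hcs)]

end EquicorrelationMatrix

section CutPolytope

variable {n : ℕ}

lemma cutVec_perimeter_le (S : Finset (Fin n)) {i j k : Fin n} (hij : i < j) (hjk : j < k) :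
    cutVec n S ⟨(i, j), hij⟩ + cutVec n S ⟨(i, k), hij.trans hjk⟩ + cutVec n S ⟨(j, k), hjk⟩
      ≤ 2 := by
  simp only [cutVec]
  by_cases hi : i ∈ S <;> by_cases hj : j ∈ S <;> by_cases hk : k ∈ S <;> simp [hi, hj, hk] <;>
    norm_num

theorem perimeter_le_of_mem_CUT {v : En n → ℝ} (hv : v ∈ CUT n) {i j k : Fin n} (hij : i < j)
    (hjk : j < k) :
    v ⟨(i, j), hij⟩ + v ⟨(i, k), hij.trans hjk⟩ + v ⟨(j, k), hjk⟩ ≤ 2 := by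
  have hlin : IsLinearMap ℝ fun v : En n → ℝ =>
      v ⟨(i, j), hij⟩ + v ⟨(i, k), hij.trans hjk⟩ + v ⟨(j, k), hjk⟩ := by
    constructor <;> intros <;> simp only [Pi.add_apply, Pi.smul_apply, smul_eq_mul] <;> ring
  refine convexHull_min ?_ (convex_halfSpace_le hlin 2) hv
  rintro _ ⟨S, rfl⟩
  exact cutVec_perimeter_le S hij hjk

lemma cutVec_filter_apply (y : Cube n) (p : En n) :
    cutVec n {i | y i} p = (if y p.1.1 then 1 else 0) + (if y p.1.2 then 1 else 0) -
      2 * ((if y p.1.1 then 1 else 0) * (if y p.1.2 then 1 else 0)) := by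
  simp only [cutVec, Finset.mem_filter, Finset.mem_univ, true_and]
  cases y p.1.1 <;> cases y p.1.2 <;> norm_num

lemma inBn.sum_mul_indicator_eq_half {μ : Cube n → ℝ} (hμ : inBn n μ) (k : Fin n) :
    ∑ y, μ y * (if y k then 1 else 0) = 1 / 2 := by
  obtain ⟨-, htotal, hmarg⟩ := hμ
  have hsplit := Finset.sum_filter_add_sum_filter_not Finset.univ (fun y : Cube n => y k = false) μ
  simp only [Bool.not_eq_false] at hsplit
  simp only [mul_ite, mul_one, mul_zero, ← Finset.sum_filter]
  linarith [hmarg k]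

theorem inBn.sum_smul_cutVec {μ : Cube n → ℝ} (hμ : inBn n μ) :
    ∑ y, μ y • cutVec n {i | y i} = fun p => (1 - corrVec n μ p) / 2 := by
  funext p
  simp only [Finset.sum_apply, Pi.smul_apply, smul_eq_mul, cutVec_filter_apply, corrVec, mul_sub,
    mul_add, Finset.sum_sub_distrib, Finset.sum_add_distrib, hμ.sum_mul_indicator_eq_half,
    mul_assoc, mul_left_comm (μ _) (2 : ℝ), ← Finset.mul_sum]
  ring

theorem inBn.one_sub_corrVec_div_two_mem_CUT {μ : Cube n → ℝ} (hμ : inBn n μ) :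
    (fun p => (1 - corrVec n μ p) / 2) ∈ CUT n := by
  rw [← hμ.sum_smul_cutVec]
  exact (convex_convexHull ℝ _).sum_mem (fun y _ => hμ.1 y) hμ.2.1
    fun y _ => subset_convexHull ℝ _ ⟨_, rfl⟩

end CutPolytope

theorem psd_but_not_bernoulli_correlation :
    (Matrix.of (fun i j : Fin 3 =>
        if i = j then (1:ℝ) else -0.4)).PosSemidef ∧
    (¬ ∃ μ : Cube 3 → ℝ, inBn 3 μ ∧ corrVec 3 μ = fun _ => -0.4) ∧
    (fun _ : En 3 => (1:ℝ) - 2 * (-0.4)) ∉ CUT 3 := by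
  refine ⟨posSemidef_equicorrelation (by norm_num) (by norm_num), ?_, fun hmem => ?_⟩
  · rintro ⟨μ, hμ, hρ⟩
    have := perimeter_le_of_mem_CUT hμ.one_sub_corrVec_div_two_mem_CUT
      (show (0 : Fin 3) < 1 by decide) (show (1 : Fin 3) < 2 by decide)
    simp only [hρ] at this
    norm_num at this
  · have := perimeter_le_of_mem_CUT hmem (show (0 : Fin 3) < 1 by decide)
      (show (1 : Fin 3) < 2 by decide)
    norm_num at this
end
end
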